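/- One cannot realize the 3-dimensional associahedron with regular pentagonal faces: in the configuration of regular pentagons suggested by Tamari's figure, the four vertices corresponding to the parenthesizings coded 2020, 2011, 1120, 1111 are not coplanar. -/

import Mathlib

set_option maxHeartbeats 1000000

open RealInnerProductSpace

local notation "E3" => EuclideanSpace ℝ (Fin 3)

private lemma inner_pts (P Q X : E3) :
    ⟪P - X, Q - X⟫ = (dist P X ^ 2 + dist Q X ^ 2 - dist P Q ^ 2) / 2 := by
  have h : P - Q = (P - X) - (Q - X) := by abel
  rw [dist_eq_norm, dist_eq_norm, dist_eq_norm, h]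
  have h1 := norm_sub_sq_real (P - X) (Q - X)
  have h2 : ‖P - X‖ ^ 2 = ⟪P - X, P - X⟫ := (real_inner_self_eq_norm_sq _).symm
  linarith

private lemma inner_pts_self (P X : E3) : ⟪P - X, P - X⟫ = dist P X ^ 2 := by
  rw [inner_pts, dist_self]; ring

private lemma dep_of_coplanar {s : Set E3} (hs : Coplanar ℝ s)
    {p₀ p₁ p₂ p₃ : E3} (h0 : p₀ ∈ s) (h1 : p₁ ∈ s) (h2 : p₂ ∈ s) (h3 : p₃ ∈ s) :
    ∃ c : Fin 3 → ℝ,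
      (c 0 • (p₁ - p₀) + c 1 • (p₂ - p₀) + c 2 • (p₃ - p₀) = 0) ∧ c ≠ 0 := by
  have hv : ∀ q ∈ s, q - p₀ ∈ vectorSpan ℝ s := fun q hq => by
    simpa [vsub_eq_sub] using vsub_mem_vectorSpan ℝ hq h0
  set V := vectorSpan ℝ s
  let w : Fin 3 → V := ![⟨p₁ - p₀, hv _ h1⟩, ⟨p₂ - p₀, hv _ h2⟩, ⟨p₃ - p₀, hv _ h3⟩]
  have hw : ¬ LinearIndependent ℝ w := by
    intro hli
    have := hli.cardinal_le_rank
    have h2' : Module.rank ℝ V ≤ 2 := hs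
    rw [Cardinal.mk_fintype] at this
    simp at this
    have : (3 : Cardinal) ≤ 2 := le_trans this h2'
    norm_num at this
  rw [Fintype.not_linearIndependent_iff] at hw
  obtain ⟨g, hg, i, hi⟩ := hw
  refine ⟨g, ?_, ?_⟩
  · have := congrArg (Subtype.val) hg
    simpa [w, Fin.sum_univ_three] using this
  · intro h; rw [h] at hi; exact hi rfl

private lemma golden {a d : ℝ} (ha : 0 < a) (had : a < d)
    {p0 p1 p2 p3 : E3} (hcop : Coplanar ℝ ({p0, p1, p2, p3} : Set E3))
    (d01 : dist p0 p1 = a) (d12 : dist p1 p2 = a) (d23 : dist p2 p3 = a)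
    (d02 : dist p0 p2 = d) (d13 : dist p1 p3 = d) (d03 : dist p0 p3 = d) :
    d ^ 2 = a * d + a ^ 2 := by
  obtain ⟨c, hc, hcne⟩ := dep_of_coplanar hcop
    (show p0 ∈ ({p0, p1, p2, p3} : Set E3) by simp)
    (show p1 ∈ ({p0, p1, p2, p3} : Set E3) by simp)
    (show p2 ∈ ({p0, p1, p2, p3} : Set E3) by simp)
    (show p3 ∈ ({p0, p1, p2, p3} : Set E3) by simp)
  set w1 := p1 - p0 with hw1
  set w2 := p2 - p0 with hw2
  set w3 := p3 - p0 with hw3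
  have i11 : ⟪w1, w1⟫ = a ^ 2 := by
    rw [hw1, inner_pts, dist_comm p1 p0, d01]; simp
  have i22 : ⟪w2, w2⟫ = d ^ 2 := by
    rw [hw2, inner_pts, dist_comm p2 p0, d02]; simp
  have i33 : ⟪w3, w3⟫ = d ^ 2 := by
    rw [hw3, inner_pts, dist_comm p3 p0, d03]; simp
  have i12 : ⟪w1, w2⟫ = d ^ 2 / 2 := by
    rw [hw1, hw2, inner_pts, dist_comm p1 p0, dist_comm p2 p0, d01, d02, d12]; ring
  have i13 : ⟪w1, w3⟫ = a ^ 2 / 2 := by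
    rw [hw1, hw3, inner_pts, dist_comm p1 p0, dist_comm p3 p0, d01, d03, d13]; ring
  have i23 : ⟪w2, w3⟫ = (2 * d ^ 2 - a ^ 2) / 2 := by
    rw [hw2, hw3, inner_pts, dist_comm p2 p0, dist_comm p3 p0, d02, d03, d23]; ring
  have i21 : ⟪w2, w1⟫ = d ^ 2 / 2 := by rw [real_inner_comm]; exact i12
  have i31 : ⟪w3, w1⟫ = a ^ 2 / 2 := by rw [real_inner_comm]; exact i13
  have i32 : ⟪w3, w2⟫ = (2 * d ^ 2 - a ^ 2) / 2 := by rw [real_inner_comm]; exact i23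
  have e1 : c 0 * (a ^ 2) + c 1 * (d ^ 2 / 2) + c 2 * (a ^ 2 / 2) = 0 := by
    have h := congrArg (fun z => ⟪z, w1⟫) hc
    simp only [inner_add_left, real_inner_smul_left, inner_zero_left] at h
    rw [i11, i21, i31] at h; linarith
  have e2 : c 0 * (d ^ 2 / 2) + c 1 * (d ^ 2) + c 2 * ((2 * d ^ 2 - a ^ 2) / 2) = 0 := by
    have h := congrArg (fun z => ⟪z, w2⟫) hc
    simp only [inner_add_left, real_inner_smul_left, inner_zero_left] at h
    rw [i12, i22, i32] at h; linarith
  have e3 : c 0 * (a ^ 2 / 2) + c 1 * ((2 * d ^ 2 - a ^ 2) / 2) + c 2 * (d ^ 2) = 0 := by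
    have h := congrArg (fun z => ⟪z, w3⟫) hc
    simp only [inner_add_left, real_inner_smul_left, inner_zero_left] at h
    rw [i13, i23, i33] at h; linarith
  have hdet : (-(1:ℝ)/4 * ((a^2 + d^2) * (d^4 - 3*a^2*d^2 + a^4))) = 0 := by
    have hne : ∃ j : Fin 3, c j ≠ 0 := by
      by_contra h
      push_neg at h
      exact hcne (funext fun j => h j)
    obtain ⟨j, hj⟩ := hne
    fin_cases j
    · have h0 : (-(1:ℝ)/4 * ((a^2 + d^2) * (d^4 - 3*a^2*d^2 + a^4))) * c 0 = 0 := by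
        linear_combination (d^2*d^2 - ((2*d^2-a^2)/2)^2) * e1 +
          (a^2/2 * ((2*d^2-a^2)/2) - d^2/2 * d^2) * e2 +
          (d^2/2 * ((2*d^2-a^2)/2) - a^2/2 * d^2) * e3
      exact (mul_eq_zero.mp h0).resolve_right hj
    · have h0 : (-(1:ℝ)/4 * ((a^2 + d^2) * (d^4 - 3*a^2*d^2 + a^4))) * c 1 = 0 := by
        linear_combination (a^2/2 * ((2*d^2-a^2)/2) - d^2/2 * d^2) * e1 +
          (a^2 * d^2 - (a^2/2)^2) * e2 +
          (a^2/2 * d^2/2 - a^2 * (2*d^2-a^2)/2) * e3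
      exact (mul_eq_zero.mp h0).resolve_right hj
    · have h0 : (-(1:ℝ)/4 * ((a^2 + d^2) * (d^4 - 3*a^2*d^2 + a^4))) * c 2 = 0 := by
        linear_combination (d^2/2 * ((2*d^2-a^2)/2) - a^2/2 * d^2) * e1 +
          (a^2/2 * d^2/2 - a^2 * (2*d^2-a^2)/2) * e2 +
          (a^2 * d^2 - (d^2/2)^2) * e3
      exact (mul_eq_zero.mp h0).resolve_right hj
  have key : (d^2 - a*d - a^2) * ((a^2 + d^2) * (d^2 + a*d - a^2)) = 0 := by
    linear_combination (-4 : ℝ) * hdet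
  have hpos : 0 < (a^2 + d^2) * (d^2 + a*d - a^2) := by
    apply mul_pos (by positivity)
    have h1 : a^2 < d^2 := by
      have := mul_lt_mul_of_pos_left had ha   -- a*a < a*d
      have := mul_lt_mul_of_pos_right had (lt_trans ha had)  -- a*d < d*d
      calc a^2 = a*a := sq a
        _ < a*d := by linarith
        _ < d*d := by linarith
        _ = d^2 := (sq d).symm
    have h2 : 0 < a*d := mul_pos ha (lt_trans ha had)
    linarith
  have := (mul_eq_zero.mp key).resolve_right (ne_of_gt hpos)
  linarith

private lemma norm_comb {u f h : E3} {A t : ℝ} (α β γ : ℝ)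
    (huu : ⟪u,u⟫ = A) (hff : ⟪f,f⟫ = A) (hhh : ⟪h,h⟫ = A)
    (huf : ⟪u,f⟫ = t) (huh : ⟪u,h⟫ = t) (hfh : ⟪f,h⟫ = t) :
    ⟪α•u + β•f + γ•h, α•u + β•f + γ•h⟫
      = (α^2 + β^2 + γ^2) * A + 2*(α*β + α*γ + β*γ) * t := by
  have hfu : ⟪f,u⟫ = t := (real_inner_comm u f).trans huf
  have hhu : ⟪h,u⟫ = t := (real_inner_comm u h).trans huh
  have hhf : ⟪h,f⟫ = t := (real_inner_comm f h).trans hfh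
  simp only [inner_add_left, inner_add_right, real_inner_smul_left, real_inner_smul_right,
    huu, hff, hhh, huf, huh, hfh, hfu, hhu, hhf]
  ring

private lemma decomp_aux {x y w : E3} {c1 c2 c3 xx yy ww xy xw yw : ℝ}
    (hxx : ⟪x,x⟫ = xx) (hyy : ⟪y,y⟫ = yy) (hww : ⟪w,w⟫ = ww)
    (hxy : ⟪x,y⟫ = xy) (hxw : ⟪x,w⟫ = xw) (hyw : ⟪y,w⟫ = yw)
    (hcond : c1^2*xx + c2^2*yy + c3^2*ww - 2*c1*c2*xy - 2*c1*c3*xw + 2*c2*c3*yw = 0) :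
    c1 • x = c2 • y + c3 • w := by
  have hz : ⟪c1•x - (c2•y + c3•w), c1•x - (c2•y + c3•w)⟫ = (0:ℝ) := by
    have hyx : ⟪y,x⟫ = xy := (real_inner_comm x y).trans hxy
    have hwx : ⟪w,x⟫ = xw := (real_inner_comm x w).trans hxw
    have hwy : ⟪w,y⟫ = yw := (real_inner_comm y w).trans hyw
    simp only [inner_sub_left, inner_sub_right, inner_add_left, inner_add_right,
      real_inner_smul_left, real_inner_smul_right,
      hxx, hyy, hww, hxy, hxw, hyw, hyx, hwx, hwy]
    linear_combination hcond
  have h0 := inner_self_eq_zero.mp hz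
  rwa [sub_eq_zero] at h0

private lemma main_core {a d : ℝ} {vO vA vB vF vG vD vH vI vC : E3}
    (ha : 0 < a) (had : a < d)
    (hcop0 : Coplanar ℝ ({vB, vA, vO, vF} : Set E3))
    (dBA : dist vB vA = a) (dAO : dist vA vO = a) (dOF : dist vO vF = a)
    (dFG : dist vF vG = a) (dBO : dist vB vO = d) (dAF : dist vA vF = d)
    (dOG : dist vO vG = d) (dFB : dist vF vB = d) (dGA : dist vG vA = d)
    (dDA : dist vD vA = a) (dOH : dist vO vH = a) (dHI : dist vH vI = a)
    (dDO : dist vD vO = d) (dAH : dist vA vH = d) (dOI : dist vO vI = d)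
    (dHD : dist vH vD = d) (dIA : dist vI vA = d) (dFH : dist vF vH = d)
    (dCB : dist vC vB = a) (dCG : dist vC vG = d) (dIC : dist vI vC = d)
    (hCA : vC ≠ vA)
    (hq : Coplanar ℝ ({vA, vB, vD, vC} : Set E3)) : False := by
  have hgold : d ^ 2 = a * d + a ^ 2 :=
    golden ha had hcop0 dBA dAO dOF dBO dAF (by rw [dist_comm]; exact dFB)
  have h2a : d < 2 * a := by
    have hd0 : 0 < d := lt_trans ha had
    have hkey : d * (d - 2*a) = a * (a - d) := by linear_combination hgold
    have h1 : a * (a - d) < 0 := mul_neg_of_pos_of_neg ha (by linarith)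
    by_contra hcon
    push_neg at hcon
    have : 0 ≤ d * (d - 2*a) := mul_nonneg hd0.le (by linarith)
    linarith
  -- Gram data for u = vA - vO, f = vF - vO, h = vH - vO
  have guu : ⟪vA - vO, vA - vO⟫ = a^2 := by rw [inner_pts_self, dAO]
  have gff : ⟪vF - vO, vF - vO⟫ = a^2 := by rw [inner_pts_self, dist_comm, dOF]
  have ghh : ⟪vH - vO, vH - vO⟫ = a^2 := by rw [inner_pts_self, dist_comm, dOH]
  have guf : ⟪vA - vO, vF - vO⟫ = (2*a^2 - d^2)/2 := by
    rw [inner_pts, dAO, dist_comm vF vO, dOF, dAF]; ring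
  have guh : ⟪vA - vO, vH - vO⟫ = (2*a^2 - d^2)/2 := by
    rw [inner_pts, dAO, dist_comm vH vO, dOH, dAH]; ring
  have gfh : ⟪vF - vO, vH - vO⟫ = (2*a^2 - d^2)/2 := by
    rw [inner_pts, dist_comm vF vO, dOF, dist_comm vH vO, dOH, dFH]; ring
  -- decompositions
  have gbb : ⟪vB - vO, vB - vO⟫ = d^2 := by rw [inner_pts_self, dBO]
  have gbu : ⟪vB - vO, vA - vO⟫ = d^2/2 := by rw [inner_pts, dBO, dAO, dBA]; ring
  have gbf : ⟪vB - vO, vF - vO⟫ = a^2/2 := by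
    rw [inner_pts, dBO, dist_comm vF vO, dOF, dist_comm vB vF, dFB]; ring
  have eB : a • (vB - vO) = d • (vA - vO) + a • (vF - vO) :=
    decomp_aux gbb guu gff gbu gbf guf (by linear_combination (-2*a*d) * hgold)
  have gdd : ⟪vD - vO, vD - vO⟫ = d^2 := by rw [inner_pts_self, dDO]
  have gdu : ⟪vD - vO, vA - vO⟫ = d^2/2 := by rw [inner_pts, dDO, dAO, dDA]; ring
  have gdh : ⟪vD - vO, vH - vO⟫ = a^2/2 := by
    rw [inner_pts, dDO, dist_comm vH vO, dOH, dist_comm vD vH, dHD]; ring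
  have eD : a • (vD - vO) = d • (vA - vO) + a • (vH - vO) :=
    decomp_aux gdd guu ghh gdu gdh guh (by linear_combination (-2*a*d) * hgold)
  have ggg : ⟪vG - vO, vG - vO⟫ = d^2 := by rw [inner_pts_self, dist_comm, dOG]
  have ggu : ⟪vG - vO, vA - vO⟫ = a^2/2 := by
    rw [inner_pts, dist_comm vG vO, dOG, dAO, dGA]; ring
  have ggf : ⟪vG - vO, vF - vO⟫ = d^2/2 := by
    rw [inner_pts, dist_comm vG vO, dOG, dist_comm vF vO, dOF, dist_comm vG vF, dFG]; ring
  have eG : a • (vG - vO) = a • (vA - vO) + d • (vF - vO) :=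
    decomp_aux ggg guu gff ggu ggf guf (by linear_combination (-2*a*d) * hgold)
  have gii : ⟪vI - vO, vI - vO⟫ = d^2 := by rw [inner_pts_self, dist_comm, dOI]
  have giu : ⟪vI - vO, vA - vO⟫ = a^2/2 := by
    rw [inner_pts, dist_comm vI vO, dOI, dAO, dIA]; ring
  have gih : ⟪vI - vO, vH - vO⟫ = d^2/2 := by
    rw [inner_pts, dist_comm vI vO, dOI, dist_comm vH vO, dOH, dist_comm vI vH, dHI]; ring
  have eI : a • (vI - vO) = a • (vA - vO) + d • (vH - vO) :=
    decomp_aux gii guu ghh giu gih guh (by linear_combination (-2*a*d) * hgold)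
  -- dependence from the assumed coplanarity of the quadrilateral
  obtain ⟨c, hc, hcne⟩ := dep_of_coplanar hq
    (show vA ∈ ({vA, vB, vD, vC} : Set E3) by simp)
    (show vB ∈ ({vA, vB, vD, vC} : Set E3) by simp)
    (show vD ∈ ({vA, vB, vD, vC} : Set E3) by simp)
    (show vC ∈ ({vA, vB, vD, vC} : Set E3) by simp)
  by_cases hc2 : c 2 = 0
  · -- degenerate case: A, B, D would be collinear, impossible
    have hBDvec : a • (vB - vD)
        = (0:ℝ) • (vA - vO) + a • (vF - vO) + (-a) • (vH - vO) := by
      linear_combination (norm := module) eB - eD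
    have hBD : dist vB vD ^ 2 = d ^ 2 := by
      have hL : ⟪a • (vB - vD), a • (vB - vD)⟫ = a^2 * dist vB vD ^ 2 := by
        rw [real_inner_smul_left, real_inner_smul_right, inner_pts_self]; ring
      rw [hBDvec] at hL
      have hR := norm_comb (0:ℝ) a (-a) guu gff ghh guf guh gfh
      have hE := hR.symm.trans hL
      have ha2 : (a:ℝ)^2 ≠ 0 := by positivity
      apply mul_left_cancel₀ ha2
      linear_combination -hE
    have gPP : ⟪vB - vA, vB - vA⟫ = a^2 := by rw [inner_pts_self, dBA]
    have gQQ : ⟪vD - vA, vD - vA⟫ = a^2 := by rw [inner_pts_self, dDA]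
    have gPQ : ⟪vB - vA, vD - vA⟫ = (2*a^2 - d^2)/2 := by
      rw [inner_pts, dBA, dDA, hBD]; ring
    have gQP : ⟪vD - vA, vB - vA⟫ = (2*a^2 - d^2)/2 := by
      rw [real_inner_comm]; exact gPQ
    rw [hc2, zero_smul, add_zero] at hc
    have e1 : c 0 * a^2 + c 1 * ((2*a^2 - d^2)/2) = 0 := by
      have h := congrArg (fun z => ⟪z, vB - vA⟫) hc
      simp only [inner_add_left, real_inner_smul_left, inner_zero_left] at h
      rw [gPP, gQP] at h; linarith
    have e2 : c 0 * ((2*a^2 - d^2)/2) + c 1 * a^2 = 0 := by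
      have h := congrArg (fun z => ⟪z, vD - vA⟫) hc
      simp only [inner_add_left, real_inner_smul_left, inner_zero_left] at h
      rw [gPQ, gQQ] at h; linarith
    have key : c 0 * (d^2 * (4*a^2 - d^2) / 4) = 0 := by
      linear_combination a^2 * e1 - ((2*a^2 - d^2)/2) * e2
    have hpos : 0 < d^2 * (4*a^2 - d^2) / 4 := by
      have hd0 : 0 < d := lt_trans ha had
      have h4 : d^2 < 4*a^2 := by
        have h := mul_lt_mul_of_pos_left h2a hd0   -- d*d < d*(2a)
        have h' := mul_lt_mul_of_pos_right h2a (by linarith : (0:ℝ) < 2*a)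
        calc d^2 = d*d := sq d
          _ < d*(2*a) := h
          _ ≤ (2*a)*(2*a) := by
              have : d*(2*a) ≤ (2*a)*(2*a) := by
                apply mul_le_mul_of_nonneg_right h2a.le (by linarith)
              linarith
          _ = 4*a^2 := by ring
      have := pow_pos hd0 2
      apply div_pos (mul_pos this (by linarith)) (by norm_num)
    have hc0 : c 0 = 0 := (mul_eq_zero.mp key).resolve_right (ne_of_gt hpos)
    have hc1 : c 1 = 0 := by
      rw [hc0] at e2
      have ha2 : (a:ℝ)^2 ≠ 0 := by positivity
      have h' : c 1 * a^2 = 0 := by linear_combination e2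
      exact (mul_eq_zero.mp h').resolve_right ha2
    exact hcne (funext fun i => by fin_cases i <;> assumption)
  · -- main case
    have hZ1 : (a * c 2) • (vC - vB)
        = (-(c 0 + c 1 + c 2)*(d - a)) • (vA - vO) + (-((c 0 + c 2)*a)) • (vF - vO)
          + (-(c 1 * a)) • (vH - vO) := by
      linear_combination (norm := module) a • hc - (c 0 + c 2) • eB - c 1 • eD
    have hZ2 : (a * c 2) • (vC - vG)
        = (-(c 0 + c 1)*(d - a)) • (vA - vO) + (-(c 0 * a + c 2 * d)) • (vF - vO)
          + (-(c 1 * a)) • (vH - vO) := by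
      linear_combination (norm := module) a • hc - c 0 • eB - c 1 • eD - c 2 • eG
    have hZ3 : (a * c 2) • (vC - vI)
        = (-(c 0 + c 1)*(d - a)) • (vA - vO) + (-(c 0 * a)) • (vF - vO)
          + (-(c 1 * a + c 2 * d)) • (vH - vO) := by
      linear_combination (norm := module) a • hc - c 0 • eB - c 1 • eD - c 2 • eI
    have E1 : ((-(c 0 + c 1 + c 2)*(d - a))^2 + (-((c 0 + c 2)*a))^2 + (-(c 1 * a))^2) * a^2
        + 2*((-(c 0 + c 1 + c 2)*(d - a)) * (-((c 0 + c 2)*a))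
            + (-(c 0 + c 1 + c 2)*(d - a)) * (-(c 1 * a))
            + (-((c 0 + c 2)*a)) * (-(c 1 * a))) * ((2*a^2 - d^2)/2)
        = (a * c 2)^2 * a^2 := by
      have hL : ⟪(a * c 2) • (vC - vB), (a * c 2) • (vC - vB)⟫ = (a * c 2)^2 * a^2 := by
        rw [real_inner_smul_left, real_inner_smul_right, inner_pts_self, dCB]; ring
      rw [hZ1] at hL
      have hR := norm_comb (-(c 0 + c 1 + c 2)*(d - a)) (-((c 0 + c 2)*a)) (-(c 1 * a))
        guu gff ghh guf guh gfh
      exact hR.symm.trans hL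
    have E2 : ((-(c 0 + c 1)*(d - a))^2 + (-(c 0 * a + c 2 * d))^2 + (-(c 1 * a))^2) * a^2
        + 2*((-(c 0 + c 1)*(d - a)) * (-(c 0 * a + c 2 * d))
            + (-(c 0 + c 1)*(d - a)) * (-(c 1 * a))
            + (-(c 0 * a + c 2 * d)) * (-(c 1 * a))) * ((2*a^2 - d^2)/2)
        = (a * c 2)^2 * d^2 := by
      have hL : ⟪(a * c 2) • (vC - vG), (a * c 2) • (vC - vG)⟫ = (a * c 2)^2 * d^2 := by
        rw [real_inner_smul_left, real_inner_smul_right, inner_pts_self, dCG]; ring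
      rw [hZ2] at hL
      have hR := norm_comb (-(c 0 + c 1)*(d - a)) (-(c 0 * a + c 2 * d)) (-(c 1 * a))
        guu gff ghh guf guh gfh
      exact hR.symm.trans hL
    have E3' : ((-(c 0 + c 1)*(d - a))^2 + (-(c 0 * a))^2 + (-(c 1 * a + c 2 * d))^2) * a^2
        + 2*((-(c 0 + c 1)*(d - a)) * (-(c 0 * a))
            + (-(c 0 + c 1)*(d - a)) * (-(c 1 * a + c 2 * d))
            + (-(c 0 * a)) * (-(c 1 * a + c 2 * d))) * ((2*a^2 - d^2)/2)
        = (a * c 2)^2 * d^2 := by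
      have hL : ⟪(a * c 2) • (vC - vI), (a * c 2) • (vC - vI)⟫ = (a * c 2)^2 * d^2 := by
        rw [real_inner_smul_left, real_inner_smul_right, inner_pts_self,
          dist_comm vC vI, dIC]; ring
      rw [hZ3] at hL
      have hR := norm_comb (-(c 0 + c 1)*(d - a)) (-(c 0 * a)) (-(c 1 * a + c 2 * d))
        guu gff ghh guf guh gfh
      exact hR.symm.trans hL
    -- from E2 - E3' : c 0 = c 1
    have hc01 : c 0 = c 1 := by
      have key : (c 0 - c 1) * (a^3 * c 2 * (2*d + a)) = 0 := by
        linear_combination E2 - E3' + (a * c 2 * (c 1 - c 0) * (d + a)) * hgold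
      have hne : a^3 * c 2 * (2*d + a) ≠ 0 := by
        apply mul_ne_zero (mul_ne_zero (by positivity) hc2)
        have : (0:ℝ) < 2*d + a := by linarith
        exact ne_of_gt this
      have := (mul_eq_zero.mp key).resolve_right hne
      linarith
    rw [← hc01] at E1 E2
    have k1 : (c 0 * (c 0 + c 2)) * (a^3 * (3*a - d)) = 0 := by
      linear_combination E1 + (a*d*(c 2)^2 + 4*a*d*(c 0)*(c 2) + 4*a*d*(c 0)^2
        - a^2*(c 2)^2 - 3*a^2*(c 0)*(c 2) - 3*a^2*(c 0)^2) * hgold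
    have k2 : (c 0 * ((3*a - d)*(c 0) + a*(c 2))) * a^3 = 0 := by
      linear_combination E2 + (2*d^2*(c 0)*(c 2) + a*d*(c 0)*(c 2) + 4*a*d*(c 0)^2
        - a^2*(c 0)*(c 2) - 3*a^2*(c 0)^2) * hgold
    have h3ad : a^3 * (3*a - d) ≠ 0 := by
      apply mul_ne_zero (by positivity)
      have : (0:ℝ) < 3*a - d := by linarith
      exact ne_of_gt this
    have ha3 : (a:ℝ)^3 ≠ 0 := by positivity
    have k1' : c 0 * (c 0 + c 2) = 0 := (mul_eq_zero.mp k1).resolve_right h3ad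
    have k2' : c 0 * ((3*a - d)*(c 0) + a*(c 2)) = 0 := (mul_eq_zero.mp k2).resolve_right ha3
    have hc00 : c 0 = 0 := by
      rcases mul_eq_zero.mp k1' with h | h
      · exact h
      · rcases mul_eq_zero.mp k2' with h' | h'
        · exact h'
        · -- c 2 = -c 0 and (3a-d) c0 + a c2 = 0 ⇒ (2a-d) c0 = 0 ⇒ c0 = 0
          have hc2eq : c 2 = -(c 0) := by linarith
          rw [hc2eq] at h'
          have : (2*a - d) * c 0 = 0 := by linarith [h']
          rcases mul_eq_zero.mp this with h'' | h''
          · linarith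
          · exact h''
    have hc10 : c 1 = 0 := hc01 ▸ hc00
    rw [hc00, hc10, zero_smul, zero_smul, zero_add, zero_add] at hc
    rcases smul_eq_zero.mp hc with h | h
    · exact hc2 h
    · exact hCA (sub_eq_zero.mp h)



/-- Five points (in cyclic order) form a regular pentagon of side `a` and
diagonal `d`: they are coplanar, consecutive points are at distance `a` and
non-consecutive ones at distance `d`. -/
def IsRegularPentagon (a d : ℝ) (p : Fin 5 → EuclideanSpace ℝ (Fin 3)) : Prop :=
  Coplanar ℝ (Set.range p) ∧ (∀ i : Fin 5, dist (p i) (p (i + 1)) = a) ∧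
    (∀ i : Fin 5, dist (p i) (p (i + 2)) = d)

/-- The six pentagonal faces of the 3-dimensional associahedron, each given by
the Tamari parenthesis-count codes of its five vertices, in cyclic order.
(The vertices are the 14 parenthesizings of a 5-letter word, coded by the
numbers of opening parentheses in front of the first four letters.) -/
def associahedronPentagons : Fin 6 → Fin 5 → List ℕ :=
  ![![[2,0,1,1], [2,0,2,0], [3,0,1,0], [4,0,0,0], [3,0,0,1]],
    ![[1,2,0,1], [1,3,0,0], [2,2,0,0], [3,1,0,0], [2,1,0,1]],
    ![[1,1,2,0], [2,0,2,0], [3,0,1,0], [2,1,1,0], [1,2,1,0]],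
    ![[1,1,1,1], [2,0,1,1], [3,0,0,1], [2,1,0,1], [1,2,0,1]],
    ![[2,1,1,0], [2,2,0,0], [3,1,0,0], [4,0,0,0], [3,0,1,0]],
    ![[1,1,1,1], [1,2,0,1], [1,3,0,0], [1,2,1,0], [1,1,2,0]]]

/-- The fourteen Tamari codes of the parenthesizings of a 5-letter word. -/
def associahedronVertices : List (List ℕ) :=
  [[1,1,1,1], [1,1,2,0], [1,2,0,1], [1,2,1,0], [1,3,0,0], [2,0,1,1], [2,0,2,0],
   [2,1,0,1], [2,1,1,0], [2,2,0,0], [3,0,0,1], [3,0,1,0], [3,1,0,0], [4,0,0,0]]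

/-- One cannot realize the 3-dimensional associahedron with regular pentagonal
faces: in any genuinely 3-dimensional configuration of points, indexed by the
parenthesizings of a 5-letter word, whose six pentagonal faces are regular
pentagons arranged as in Tamari's figure, the four vertices coded
`2020, 2011, 1120, 1111` are not coplanar. -/
theorem associahedron_not_realizable_with_regular_pentagons
    (v : List ℕ → EuclideanSpace ℝ (Fin 3)) (a d : ℝ) (ha : 0 < a) (had : a < d)
    (hreg : ∀ k : Fin 6, IsRegularPentagon a d (fun i => v (associahedronPentagons k i)))
    (hinj : ∀ c ∈ associahedronVertices, ∀ c' ∈ associahedronVertices,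
      v c = v c' → c = c')
    (hflat : ¬ Coplanar ℝ (v '' {c | c ∈ associahedronVertices})) :
    ¬ Coplanar ℝ {v [2,0,2,0], v [2,0,1,1], v [1,1,2,0], v [1,1,1,1]} := by
  intro hq
  have dBA : dist (v [2,0,1,1]) (v [2,0,2,0]) = a := by
    simpa [associahedronPentagons] using (hreg 0).2.1 0
  have dAO : dist (v [2,0,2,0]) (v [3,0,1,0]) = a := by
    simpa [associahedronPentagons] using (hreg 0).2.1 1
  have dOF : dist (v [3,0,1,0]) (v [4,0,0,0]) = a := by
    simpa [associahedronPentagons] using (hreg 0).2.1 2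
  have dFG : dist (v [4,0,0,0]) (v [3,0,0,1]) = a := by
    simpa [associahedronPentagons] using (hreg 0).2.1 3
  have dBO : dist (v [2,0,1,1]) (v [3,0,1,0]) = d := by
    simpa [associahedronPentagons] using (hreg 0).2.2 0
  have dAF : dist (v [2,0,2,0]) (v [4,0,0,0]) = d := by
    simpa [associahedronPentagons] using (hreg 0).2.2 1
  have dOG : dist (v [3,0,1,0]) (v [3,0,0,1]) = d := by
    simpa [associahedronPentagons] using (hreg 0).2.2 2
  have dFB : dist (v [4,0,0,0]) (v [2,0,1,1]) = d := by
    simpa [associahedronPentagons] using (hreg 0).2.2 3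
  have dGA : dist (v [3,0,0,1]) (v [2,0,2,0]) = d := by
    simpa [associahedronPentagons] using (hreg 0).2.2 4
  have dDA : dist (v [1,1,2,0]) (v [2,0,2,0]) = a := by
    simpa [associahedronPentagons] using (hreg 2).2.1 0
  have dOH : dist (v [3,0,1,0]) (v [2,1,1,0]) = a := by
    simpa [associahedronPentagons] using (hreg 2).2.1 2
  have dHI : dist (v [2,1,1,0]) (v [1,2,1,0]) = a := by
    simpa [associahedronPentagons] using (hreg 2).2.1 3
  have dDO : dist (v [1,1,2,0]) (v [3,0,1,0]) = d := by
    simpa [associahedronPentagons] using (hreg 2).2.2 0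
  have dAH : dist (v [2,0,2,0]) (v [2,1,1,0]) = d := by
    simpa [associahedronPentagons] using (hreg 2).2.2 1
  have dOI : dist (v [3,0,1,0]) (v [1,2,1,0]) = d := by
    simpa [associahedronPentagons] using (hreg 2).2.2 2
  have dHD : dist (v [2,1,1,0]) (v [1,1,2,0]) = d := by
    simpa [associahedronPentagons] using (hreg 2).2.2 3
  have dIA : dist (v [1,2,1,0]) (v [2,0,2,0]) = d := by
    simpa [associahedronPentagons] using (hreg 2).2.2 4
  have dFH : dist (v [4,0,0,0]) (v [2,1,1,0]) = d := by
    simpa [associahedronPentagons] using (hreg 4).2.2 3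
  have dCB : dist (v [1,1,1,1]) (v [2,0,1,1]) = a := by
    simpa [associahedronPentagons] using (hreg 3).2.1 0
  have dCG : dist (v [1,1,1,1]) (v [3,0,0,1]) = d := by
    simpa [associahedronPentagons] using (hreg 3).2.2 0
  have dIC : dist (v [1,2,1,0]) (v [1,1,1,1]) = d := by
    simpa [associahedronPentagons] using (hreg 5).2.2 3
  have hsub : ({v [2,0,1,1], v [2,0,2,0], v [3,0,1,0], v [4,0,0,0]} : Set E3)
      ⊆ Set.range (fun i => v (associahedronPentagons 0 i)) := by
    simp only [Set.insert_subset_iff, Set.singleton_subset_iff]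
    refine ⟨⟨0, ?_⟩, ⟨1, ?_⟩, ⟨2, ?_⟩, ⟨3, ?_⟩⟩ <;> norm_num [associahedronPentagons] <;> rfl
  have hcop0 : Coplanar ℝ ({v [2,0,1,1], v [2,0,2,0], v [3,0,1,0], v [4,0,0,0]} : Set E3) :=
    Coplanar.subset hsub (hreg 0).1
  have hCA : v [1,1,1,1] ≠ v [2,0,2,0] := by
    intro h
    have hmem1 : [1,1,1,1] ∈ associahedronVertices := by norm_num [associahedronVertices]
    have hmem2 : [2,0,2,0] ∈ associahedronVertices := by norm_num [associahedronVertices]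
    have := hinj _ hmem1 _ hmem2 h
    simp at this
  exact main_core ha had hcop0 dBA dAO dOF dFG dBO dAF dOG dFB dGA dDA dOH dHI
    dDO dAH dOI dHD dIA dFH dCB dCG dIC hCA hq
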